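/- For n ≥ 3, every word over {1,...,n} containing all permutations of length n as factors has length at least n! + (n-1)! + n - 2. -/

import Mathlib

/-- `w` is a permutation of length `n`: a word on `{1,...,n}` with each letter occurring once. -/
def IsPermWord (n : Nat) (w : List Nat) : Prop :=
  w.length = n ∧ w.Nodup ∧ ∀ x ∈ w, 1 ≤ x ∧ x ≤ n

/-!
Record, for every permutation, the position of its first occurrence as a window of `w`; these
`n!` positions are distinct and at most `|w| - n`. The cyclic class of a permutation is completed
at the largest of the first-occurrence positions of its rotations. A window determines its class,
so there are at least `n! / n = (n-1)!` distinct completion positions. If `c` is a completion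
position other than the last one, the window at `c + 1` is not a new permutation: two consecutive
windows that are anagrams differ by a rotation, so it would lie in the class completed at `c`.
Hence the `n!` first-occurrence positions and the `(n-1)! - 1` positions `c + 1` are distinct
elements of `{0, …, |w| - n}`.
-/

namespace Superpermutation

open Finset

theorem card_add_card_le_of_succ_notMem {S C : Finset ℕ} {N : ℕ} (hS : ∀ x ∈ S, x < N)
    (hCS : C ⊆ S) (hgap : ∀ c ∈ C, ∀ c' ∈ C, c < c' → c + 1 ∉ S) :
    #S + #C ≤ N + 1 := by
  rcases C.eq_empty_or_nonempty with rfl | hC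
  · have hSN : #S ≤ #(range N) := card_le_card fun x hx => mem_range.2 (hS x hx)
    rw [card_range] at hSN
    rw [card_empty]
    omega
  set m := C.max' hC
  have hlt : ∀ c ∈ C.erase m, c < m := fun c hc =>
    lt_of_le_of_ne (C.le_max' c (mem_of_mem_erase hc)) (ne_of_mem_erase hc)
  set T := (C.erase m).image (· + 1)
  have hT : #T + 1 = #C := by
    rw [card_image_of_injective _ (add_left_injective 1), card_erase_add_one (C.max'_mem hC)]
  have hdisj : Disjoint S T := by
    rw [disjoint_right]
    rintro _ ht
    obtain ⟨c, hc, rfl⟩ := mem_image.1 ht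
    exact hgap c (mem_of_mem_erase hc) m (C.max'_mem hC) (hlt c hc)
  have hsub : S ∪ T ⊆ range N := by
    intro x hx
    rcases mem_union.1 hx with hx | hx
    · exact mem_range.2 (hS x hx)
    · obtain ⟨c, hc, rfl⟩ := mem_image.1 hx
      have := hS m (hCS (C.max'_mem hC))
      have := hlt c hc
      exact mem_range.2 (by omega)
  have := card_le_card hsub
  rw [card_union_of_disjoint hdisj, card_range] at this
  omega

open List Nat

variable {α : Type*}

def window (w : List α) (n i : ℕ) : List α :=
  (w.drop i).take n

/-- Junk value `0` when `p` is not a factor of `w`. -/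
noncomputable def firstOcc (w p : List α) : ℕ :=
  sInf {i | window w p.length i = p}

section Window

variable {w p : List α}

theorem length_window (w : List α) (n i : ℕ) :
    (window w n i).length = min n (w.length - i) := by
  simp [window]

theorem exists_window_eq_of_isInfix (h : p <:+: w) : ∃ i, window w p.length i = p := by
  obtain ⟨s, t, rfl⟩ := h
  exact ⟨s.length, by simp [window, List.append_assoc]⟩

theorem window_firstOcc (h : p <:+: w) : window w p.length (firstOcc w p) = p :=
  Nat.sInf_mem (exists_window_eq_of_isInfix h)

theorem firstOcc_add_length_le (h : p <:+: w) : firstOcc w p + p.length ≤ w.length := by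
  rcases eq_or_ne p [] with rfl | hp
  · simp [firstOcc, window]
  have hlen := congrArg List.length (window_firstOcc h)
  rw [length_window] at hlen
  have := List.length_pos_of_ne_nil hp
  omega

theorem eq_of_firstOcc_eq {q : List α} (hp : p <:+: w) (hq : q <:+: w)
    (hlen : p.length = q.length) (h : firstOcc w p = firstOcc w q) : p = q := by
  rw [← window_firstOcc hp, ← window_firstOcc hq, h, hlen]

theorem eq_of_cons_perm_append_singleton {a x : α} {m : List α} (h : a :: m ~ m ++ [x]) :
    a = x := by
  have : m ++ [a] ~ m ++ [x] := (perm_append_singleton a m).trans h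
  exact singleton_perm_singleton.mp ((perm_append_left_iff m).mp this)

theorem window_succ_eq_rotate_of_perm {n i : ℕ} (hn : 0 < n) (hi : i + 1 + n ≤ w.length)
    (h : window w n i ~ window w n (i + 1)) :
    window w n (i + 1) = (window w n i).rotate 1 := by
  obtain ⟨k, rfl⟩ : ∃ k, n = k + 1 := ⟨n - 1, by omega⟩
  have hhead : window w (k + 1) i = w[i] :: window w k (i + 1) := by
    rw [window, drop_eq_getElem_cons (by omega), take_succ_cons]
    rfl
  have hlast : window w (k + 1) (i + 1) = window w k (i + 1) ++ [w[i + 1 + k]] := by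
    rw [window, take_add_one, getElem?_drop, getElem?_eq_getElem (by omega)]
    rfl
  rw [hhead, hlast] at h ⊢
  rw [rotate_cons_succ, rotate_zero, eq_of_cons_perm_append_singleton h]

end Window

section Rotation

variable [DecidableEq α] {w p q : List α}

/-- The position at which the cyclic class of `p` is completed in `w`. -/
noncomputable def lastRotationOcc (w p : List α) : ℕ :=
  p.cyclicPermutations.toFinset.sup (firstOcc w)

theorem firstOcc_le_lastRotationOcc (h : q ~r p) : firstOcc w q ≤ lastRotationOcc w p :=
  Finset.le_sup (mem_toFinset.2 (mem_cyclicPermutations_iff.2 h))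

theorem exists_isRotated_firstOcc_eq_lastRotationOcc (w p : List α) :
    ∃ q, q ~r p ∧ firstOcc w q = lastRotationOcc w p := by
  obtain ⟨q, hq, hsup⟩ := Finset.exists_mem_eq_sup _
    (toFinset_nonempty_iff _ |>.2 (cyclicPermutations_ne_nil p)) (firstOcc w)
  exact ⟨q, mem_cyclicPermutations_iff.1 (mem_toFinset.1 hq), hsup.symm⟩

theorem window_lastRotationOcc_isRotated (hw : ∀ q, q ~r p → q <:+: w) :
    window w p.length (lastRotationOcc w p) ~r p := by
  obtain ⟨q, hq, hocc⟩ := exists_isRotated_firstOcc_eq_lastRotationOcc w p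
  rw [← hocc, ← hq.perm.length_eq, window_firstOcc (hw q hq)]
  exact hq

end Rotation

section Permutations

variable [DecidableEq α] {s w : List α}

theorem window_lastRotationOcc_isRotated_of_perm (hw : ∀ p, p ~ s → p <:+: w) {p : List α}
    (hp : p ~ s) : window w s.length (lastRotationOcc w p) ~r p := by
  rw [← hp.length_eq]
  exact window_lastRotationOcc_isRotated fun q hq => hw q (hq.perm.trans hp)

/-- The letter following the completion of a cyclic class is wasted. -/
theorem firstOcc_ne_lastRotationOcc_add_one (hw : ∀ p, p ~ s → p <:+: w) (hs : s ≠ [])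
    {p r : List α} (hp : p ~ s) (hr : r ~ s)
    (hfit : lastRotationOcc w p + 1 + s.length ≤ w.length) :
    firstOcc w r ≠ lastRotationOcc w p + 1 := by
  intro hocc
  have hc := window_lastRotationOcc_isRotated_of_perm hw hp
  have hr' : window w s.length (lastRotationOcc w p + 1) = r := by
    rw [← hocc, ← hr.length_eq]
    exact window_firstOcc (hw r hr)
  have hstep := window_succ_eq_rotate_of_perm (length_pos_of_ne_nil hs) hfit
    (by rw [hr']; exact hc.perm.trans (hp.trans hr.symm))
  have hrp : r ~r p := hr' ▸ hstep ▸ (IsRotated.forall _ 1).trans hc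
  have := firstOcc_le_lastRotationOcc (w := w) hrp
  omega

theorem card_filter_lastRotationOcc_eq_le (hw : ∀ p, p ~ s → p <:+: w) (hs : s ≠ []) (c : ℕ) :
    #{p ∈ s.permutations.toFinset | lastRotationOcc w p = c} ≤ s.length := by
  rcases Finset.eq_empty_or_nonempty {p ∈ s.permutations.toFinset | lastRotationOcc w p = c}
    with hempty | ⟨p₀, hp₀⟩
  · simp [hempty]
  have hmem : ∀ p ∈ {p ∈ s.permutations.toFinset | lastRotationOcc w p = c},
      p ~r window w s.length c := by
    intro p hp
    simp only [Finset.mem_filter, mem_toFinset, mem_permutations] at hp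
    exact hp.2 ▸ (window_lastRotationOcc_isRotated_of_perm hw hp.1).symm
  have hlen : (window w s.length c).length = s.length := by
    have hp₀s := (mem_permutations.1 (mem_toFinset.1 (Finset.mem_filter.1 hp₀).1)).length_eq
    rw [← (hmem p₀ hp₀).perm.length_eq, hp₀s]
  calc #{p ∈ s.permutations.toFinset | lastRotationOcc w p = c}
      ≤ #(window w s.length c).cyclicPermutations.toFinset :=
        card_le_card fun p hp => mem_toFinset.2 (mem_cyclicPermutations_iff.2 (hmem p hp))
    _ ≤ (window w s.length c).length :=
        (toFinset_card_le _).trans_eq <| length_cyclicPermutations_of_ne_nil _ <|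
          ne_nil_of_length_pos (by rw [hlen]; exact length_pos_of_ne_nil hs)
    _ = s.length := hlen

theorem factorial_add_factorial_pred_add_length_le (hs : s.Nodup) (hne : s ≠ [])
    (hw : ∀ p, p ~ s → p <:+: w) :
    s.length ! + (s.length - 1)! + s.length ≤ w.length + 2 := by
  set P := s.permutations.toFinset
  have hmemP : ∀ {p}, p ∈ P ↔ p ~ s := by simp [P]
  have hP : #P = s.length ! := by
    rw [toFinset_card_of_nodup (nodup_permutations s hs), length_permutations]
  have hS : #(P.image (firstOcc w)) = s.length ! := by
    rw [Finset.card_image_of_injOn, hP]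
    intro p hp q hq
    exact eq_of_firstOcc_eq (hw p (hmemP.1 hp)) (hw q (hmemP.1 hq))
      ((hmemP.1 hp).length_eq.trans (hmemP.1 hq).length_eq.symm)
  have hCS : P.image (lastRotationOcc w) ⊆ P.image (firstOcc w) := by
    intro c hc
    obtain ⟨p, hp, rfl⟩ := mem_image.1 hc
    obtain ⟨q, hq, hocc⟩ := exists_isRotated_firstOcc_eq_lastRotationOcc w p
    exact mem_image.2 ⟨q, hmemP.2 (hq.perm.trans (hmemP.1 hp)), hocc⟩
  have hfit : ∀ x ∈ P.image (firstOcc w), x < w.length - s.length + 1 := by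
    intro x hx
    obtain ⟨p, hp, rfl⟩ := mem_image.1 hx
    have := firstOcc_add_length_le (hw p (hmemP.1 hp))
    rw [(hmemP.1 hp).length_eq] at this
    omega
  have hgap : ∀ c ∈ P.image (lastRotationOcc w), ∀ c' ∈ P.image (lastRotationOcc w), c < c' →
      c + 1 ∉ P.image (firstOcc w) := by
    intro c hc c' hc' hlt hsucc
    obtain ⟨p, hp, rfl⟩ := mem_image.1 hc
    obtain ⟨r, hr, hocc⟩ := mem_image.1 hsucc
    have := hfit c' (hCS hc')
    exact firstOcc_ne_lastRotationOcc_add_one hw hne (hmemP.1 hp) (hmemP.1 hr) (by omega) hocc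
  have hcount := card_add_card_le_of_succ_notMem hfit hCS hgap
  have hclasses : s.length * (s.length - 1)! ≤ s.length * #(P.image (lastRotationOcc w)) := by
    rw [mul_factorial_pred (length_pos_of_ne_nil hne).ne', ← hP]
    exact card_le_mul_card_image P _ fun c _ => card_filter_lastRotationOcc_eq_le hw hne c
  have := Nat.le_of_mul_le_mul_left hclasses (length_pos_of_ne_nil hne)
  have := (hw s (Perm.refl s)).length_le
  omega

end Permutations

end Superpermutation

theorem isPermWord_iff_perm_range' (n : ℕ) (p : List ℕ) :
    IsPermWord n p ↔ p.Perm (List.range' 1 n) := by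
  constructor
  · rintro ⟨hl, hd, hm⟩
    refine (List.subperm_of_subset hd fun x hx => ?_).perm_of_length_le (by simp [hl])
    have := hm x hx
    rw [List.mem_range'_1]
    omega
  · intro h
    refine ⟨by simpa using h.length_eq, h.nodup_iff.2 List.nodup_range', fun x hx => ?_⟩
    have := List.mem_range'_1.1 (h.mem_iff.1 hx)
    omega

theorem superpermutation_cyclic_class_lower_bound (n : Nat) (hn : 3 ≤ n) (w : List Nat)
    (huniv : ∀ p : List Nat, IsPermWord n p → p <:+: w) :
    n.factorial + (n - 1).factorial + n - 2 ≤ w.length := by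
  have hne : List.range' 1 n ≠ [] := List.ne_nil_of_length_pos (by rw [List.length_range']; omega)
  have := Superpermutation.factorial_add_factorial_pred_add_length_le List.nodup_range' hne
    fun p hp => huniv p ((isPermWord_iff_perm_range' n p).2 hp)
  simp only [List.length_range'] at this
  omega
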